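/- arXiv:1010.3435 — 5 statements merged into one kernel-verified Lean document; each statement's English description precedes it below -/
import Mathlib

section
/- Let α > 0, 0 ≤ ν ≤ 1, and s ≥ 0 be real numbers, and suppose the function ρ: [0,1] → [0,∞) satisfies 0 ≤ λ^ν ρ(λ) ≤ s^{-ν} for all λ ∈ [0,1] (with the convention that the bound is vacuous when s = 0 and ν > 0), and 0 ≤ ρ(λ) ≤ 1. Then 0 ≤ λ^ν (α+λ)^{-1} ρ(λ) ≤ 2 α^{ν-1} (1 + α s)^{-ν} for all λ ∈ [0,1]. -/
theorem stmt_4 (α ν s : ℝ) (hα : 0 < α) (hν0 : 0 ≤ ν) (hν1 : ν ≤ 1) (hs : 0 ≤ s)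
    (ρ : ℝ → ℝ)
    (hρ0 : ∀ l ∈ Set.Icc (0 : ℝ) 1, 0 ≤ ρ l)
    (hρ1 : ∀ l ∈ Set.Icc (0 : ℝ) 1, ρ l ≤ 1)
    (hbound : ∀ l ∈ Set.Icc (0 : ℝ) 1, 0 < s → l ^ ν * ρ l ≤ s ^ (-ν)) :
    ∀ l ∈ Set.Icc (0 : ℝ) 1,
      0 ≤ l ^ ν * (α + l)⁻¹ * ρ l ∧
        l ^ ν * (α + l)⁻¹ * ρ l ≤ 2 * α ^ (ν - 1) * (1 + α * s) ^ (-ν) := by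
  intro l hl
  obtain ⟨hl0, hl1⟩ := hl
  have hρ0' := hρ0 l ⟨hl0, hl1⟩
  have hρ1' := hρ1 l ⟨hl0, hl1⟩
  have hαl : (0:ℝ) < α + l := by linarith
  have hlν : (0:ℝ) ≤ l ^ ν := Real.rpow_nonneg hl0 ν
  have h1as : (0:ℝ) < 1 + α * s := by positivity
  have hαν1 : 0 < α ^ (ν - 1) := Real.rpow_pos_of_pos hα _
  refine ⟨by positivity, ?_⟩
  have key1 : l ^ ν * (α + l)⁻¹ ≤ α ^ (ν - 1) := by
    have h1 : l ^ ν ≤ (α + l) ^ ν := Real.rpow_le_rpow hl0 (by linarith) hν0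
    have h2 : (α + l) ^ (ν - 1) ≤ α ^ (ν - 1) :=
      Real.rpow_le_rpow_of_nonpos hα (by linarith) (by linarith)
    calc l ^ ν * (α + l)⁻¹ ≤ (α + l) ^ ν * (α + l)⁻¹ :=
          mul_le_mul_of_nonneg_right h1 (by positivity)
      _ = (α + l) ^ (ν - 1) := by
          rw [Real.rpow_sub hαl, Real.rpow_one]; ring
      _ ≤ α ^ (ν - 1) := h2
  have h2inv : (2:ℝ)⁻¹ ≤ (2:ℝ) ^ (-ν) := by
    have hb : (2:ℝ) ^ (-(1:ℝ)) ≤ (2:ℝ) ^ (-ν) :=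
      Real.rpow_le_rpow_of_exponent_le (by norm_num) (by linarith)
    rwa [Real.rpow_neg_one] at hb
  by_cases hcase : α * s ≤ 1
  · have ha : (2:ℝ) ^ (-ν) ≤ (1 + α * s) ^ (-ν) :=
      Real.rpow_le_rpow_of_nonpos h1as (by linarith) (by linarith)
    have h2 : (2:ℝ)⁻¹ ≤ (1 + α * s) ^ (-ν) := le_trans h2inv ha
    calc l ^ ν * (α + l)⁻¹ * ρ l ≤ l ^ ν * (α + l)⁻¹ * 1 :=
          mul_le_mul_of_nonneg_left hρ1' (by positivity)
      _ = l ^ ν * (α + l)⁻¹ := mul_one _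
      _ ≤ α ^ (ν - 1) := key1
      _ ≤ 2 * α ^ (ν - 1) * (1 + α * s) ^ (-ν) := by nlinarith
  · have hspos : 0 < s := by nlinarith
    have hb := hbound l ⟨hl0, hl1⟩ hspos
    have hsν : 0 < s ^ (-ν) := Real.rpow_pos_of_pos hspos _
    have hαnν : 0 < α ^ (-ν) := Real.rpow_pos_of_pos hα _
    have hinv : (α + l)⁻¹ ≤ α⁻¹ := by
      apply inv_anti₀ hα (by linarith)
    have hchain : l ^ ν * (α + l)⁻¹ * ρ l ≤ s ^ (-ν) * α⁻¹ := by
      have h := mul_le_mul hb hinv (by positivity) hsν.le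
      calc l ^ ν * (α + l)⁻¹ * ρ l = l ^ ν * ρ l * (α + l)⁻¹ := by ring
        _ ≤ s ^ (-ν) * α⁻¹ := h
    have hmul : ((2:ℝ) * (α * s)) ^ (-ν) = 2 ^ (-ν) * (α ^ (-ν) * s ^ (-ν)) := by
      rw [Real.mul_rpow (by norm_num) (by positivity), Real.mul_rpow hα.le hs]
    have hle1 : (2 * (α * s)) ^ (-ν) ≤ (1 + α * s) ^ (-ν) :=
      Real.rpow_le_rpow_of_nonpos h1as (by nlinarith) (by linarith)
    have hαν : α ^ (ν - 1) * α ^ (-ν) = α⁻¹ := by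
      rw [← Real.rpow_add hα, show ν - 1 + -ν = -1 by ring, Real.rpow_neg_one]
    calc l ^ ν * (α + l)⁻¹ * ρ l ≤ s ^ (-ν) * α⁻¹ := hchain
      _ = α ^ (ν - 1) * α ^ (-ν) * s ^ (-ν) := by rw [hαν]; ring
      _ ≤ 2 * α ^ (ν - 1) * ((2 * (α * s)) ^ (-ν)) := by
          rw [hmul]
          nlinarith [mul_nonneg (mul_nonneg hαν1.le hαnν.le) hsν.le]
      _ ≤ 2 * α ^ (ν - 1) * (1 + α * s) ^ (-ν) :=
          mul_le_mul_of_nonneg_left hle1 (by positivity)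
end

section
/- Let {α_j} be positive reals with α_j ≤ c_1 for all j, set s_{-1} = 0 and s_n = Σ_{j=0}^n 1/α_j. For real p, q ≥ 0 with max{p,q} < 1, there is a constant C_0 depending only on c_1, p, q such that Σ_{j=0}^n (1/α_j) (s_n - s_{j-1})^{-p} s_j^{-q} ≤ C_0 s_n^{1-p-q} for all n ≥ 0. -/
/-!
Write `s_j` for the partial sums and `S = s_n`. If `s_{j-1} ≤ S / 2` then
`(S - s_{j-1})^{-p} ≤ 2^p S^{-p}`, while concavity of `x ↦ x^{1-q}` gives
`(s_j - s_{j-1}) s_j^{-q} ≤ (s_j^{1-q} - s_{j-1}^{1-q}) / (1 - q)`. Otherwise `s_j ≥ S / 2`, and the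
roles of `p` and `q` are exchanged, using concavity of `x ↦ (S - x)^{1-p}`. Both bounds
telescope, so the sum is at most `(2^p / (1 - q) + 2^q / (1 - p)) S^{1-p-q}`.
-/

open Finset Real

lemma sub_mul_rpow_neg_le {q a b : ℝ} (hq0 : 0 ≤ q) (hq1 : q < 1) (ha : 0 ≤ a)
    (hb : 0 < b) :
    (b - a) * b ^ (-q) ≤ (b ^ (1 - q) - a ^ (1 - q)) / (1 - q) := by
  have hr : 0 < 1 - q := by linarith
  have bernoulli : (a / b) ^ (1 - q) ≤ 1 + (1 - q) * (a / b - 1) := by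
    simpa using rpow_one_add_le_one_add_mul_self (s := a / b - 1)
      (by linarith [div_nonneg ha hb.le]) hr.le (by linarith)
  have ha_rpow : a ^ (1 - q) = (a / b) ^ (1 - q) * b ^ (1 - q) := by
    rw [← mul_rpow (div_nonneg ha hb.le) hb.le, div_mul_cancel₀ _ hb.ne']
  have hb_rpow : b ^ (-q) = b ^ (1 - q) / b := by
    rw [← rpow_sub_one hb.ne']; ring_nf
  have hbr : 0 ≤ b ^ (1 - q) := rpow_nonneg hb.le _
  rw [le_div_iff₀ hr, hb_rpow, ha_rpow]
  have : (b - a) * (b ^ (1 - q) / b) * (1 - q) = (1 - q) * (1 - a / b) * b ^ (1 - q) := by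
    field_simp
  rw [this]
  nlinarith [mul_le_mul_of_nonneg_right bernoulli hbr]

lemma rpow_neg_le_two_rpow_mul {p S x : ℝ} (hp : 0 ≤ p) (hS : 0 < S) (hx : S / 2 ≤ x) :
    x ^ (-p) ≤ 2 ^ p * S ^ (-p) :=
  calc x ^ (-p) ≤ (S / 2) ^ (-p) := rpow_le_rpow_of_nonpos (by positivity) hx (by linarith)
    _ = 2 ^ p * S ^ (-p) := by
      rw [div_rpow hS.le zero_le_two, rpow_neg zero_le_two, div_inv_eq_mul, mul_comm]

lemma sub_mul_rpow_neg_mul_rpow_neg_le {p q a b S : ℝ} (hp0 : 0 ≤ p) (hp1 : p < 1)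
    (hq0 : 0 ≤ q) (hq1 : q < 1) (ha : 0 ≤ a) (hab : a < b) (hbS : b ≤ S) :
    (b - a) * (S - a) ^ (-p) * b ^ (-q) ≤
      2 ^ p / (1 - q) * S ^ (-p) * (b ^ (1 - q) - a ^ (1 - q)) +
        2 ^ q / (1 - p) * S ^ (-q) * ((S - a) ^ (1 - p) - (S - b) ^ (1 - p)) := by
  have hS : 0 < S := by linarith
  have hq' : 0 < 1 - q := by linarith
  have hp' : 0 < 1 - p := by linarith
  have hSa : 0 < S - a := by linarith
  have hFd : 0 ≤ b ^ (1 - q) - a ^ (1 - q) := sub_nonneg.mpr (rpow_le_rpow ha hab.le hq'.le)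
  have hGd : 0 ≤ (S - a) ^ (1 - p) - (S - b) ^ (1 - p) :=
    sub_nonneg.mpr (rpow_le_rpow (by linarith) (by linarith) hp'.le)
  have hF : 0 ≤ 2 ^ p / (1 - q) * S ^ (-p) * (b ^ (1 - q) - a ^ (1 - q)) :=
    mul_nonneg (by positivity) hFd
  have hG : 0 ≤ 2 ^ q / (1 - p) * S ^ (-q) * ((S - a) ^ (1 - p) - (S - b) ^ (1 - p)) :=
    mul_nonneg (by positivity) hGd
  rcases le_total a (S / 2) with hhalf | hhalf
  · have hpf := rpow_neg_le_two_rpow_mul hp0 hS (show S / 2 ≤ S - a by linarith)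
    have hqf := sub_mul_rpow_neg_le hq0 hq1 ha (by linarith : 0 < b)
    calc (b - a) * (S - a) ^ (-p) * b ^ (-q)
        = (S - a) ^ (-p) * ((b - a) * b ^ (-q)) := by ring
      _ ≤ 2 ^ p * S ^ (-p) * ((b ^ (1 - q) - a ^ (1 - q)) / (1 - q)) :=
          mul_le_mul hpf hqf (mul_nonneg (by linarith) (rpow_nonneg (by linarith) _))
            (by positivity)
      _ = 2 ^ p / (1 - q) * S ^ (-p) * (b ^ (1 - q) - a ^ (1 - q)) := by ring
      _ ≤ _ := le_add_of_nonneg_right hG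
  · have hqf := rpow_neg_le_two_rpow_mul hq0 hS (show S / 2 ≤ b by linarith)
    have hpf := sub_mul_rpow_neg_le hp0 hp1 (by linarith : 0 ≤ S - b) hSa
    rw [show S - a - (S - b) = b - a by ring] at hpf
    calc (b - a) * (S - a) ^ (-p) * b ^ (-q)
        ≤ ((S - a) ^ (1 - p) - (S - b) ^ (1 - p)) / (1 - p) * (2 ^ q * S ^ (-q)) :=
          mul_le_mul hpf hqf (rpow_nonneg (by linarith) _)
            (div_nonneg hGd hp'.le)
      _ = 2 ^ q / (1 - p) * S ^ (-q) * ((S - a) ^ (1 - p) - (S - b) ^ (1 - p)) := by ring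
      _ ≤ _ := le_add_of_nonneg_left hF

lemma sum_sub_mul_rpow_neg_mul_rpow_neg_le {p q : ℝ} (hp0 : 0 ≤ p) (hp1 : p < 1)
    (hq0 : 0 ≤ q) (hq1 : q < 1) {s : ℕ → ℝ} (hs : StrictMono s) (hs0 : s 0 = 0) (n : ℕ) :
    ∑ j ∈ range (n + 1), (s (j + 1) - s j) * (s (n + 1) - s j) ^ (-p) * s (j + 1) ^ (-q) ≤
      (2 ^ p / (1 - q) + 2 ^ q / (1 - p)) * s (n + 1) ^ (1 - p - q) := by
  set S := s (n + 1)
  have hS : 0 < S := hs0 ▸ hs (Nat.succ_pos n)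
  have hs_nonneg : ∀ j, 0 ≤ s j := fun j => hs0 ▸ hs.monotone (Nat.zero_le j)
  calc _ ≤ ∑ j ∈ range (n + 1),
        (2 ^ p / (1 - q) * S ^ (-p) * (s (j + 1) ^ (1 - q) - s j ^ (1 - q)) +
          2 ^ q / (1 - p) * S ^ (-q) * ((S - s j) ^ (1 - p) - (S - s (j + 1)) ^ (1 - p))) :=
        sum_le_sum fun j hj => sub_mul_rpow_neg_mul_rpow_neg_le hp0 hp1 hq0 hq1 (hs_nonneg j)
          (hs (Nat.lt_succ_self j)) (hs.monotone (by simpa using hj))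
    _ = 2 ^ p / (1 - q) * S ^ (-p) * S ^ (1 - q) + 2 ^ q / (1 - p) * S ^ (-q) * S ^ (1 - p) := by
        rw [sum_add_distrib, ← mul_sum, ← mul_sum, sum_range_sub (fun j => s j ^ (1 - q)),
          sum_range_sub' (fun j => (S - s j) ^ (1 - p)), hs0, sub_self, sub_zero,
          zero_rpow (by linarith), zero_rpow (by linarith), sub_zero, sub_zero]
    _ = _ := by
        rw [mul_assoc, mul_assoc, ← rpow_add hS, ← rpow_add hS]
        ring_nf

theorem stmt_5_general (c1 p q : ℝ) (hp : 0 ≤ p) (hq : 0 ≤ q)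
    (hpq : max p q < 1) :
    ∃ C0 : ℝ, 0 < C0 ∧ ∀ (α : ℕ → ℝ), (∀ j, 0 < α j) → (∀ j, α j ≤ c1) →
      ∀ n : ℕ,
        ∑ j ∈ Finset.range (n + 1),
            (1 / α j) *
              ((∑ i ∈ Finset.range (n + 1), 1 / α i) -
                  ∑ i ∈ Finset.range j, 1 / α i) ^ (-p) *
              (∑ i ∈ Finset.range (j + 1), 1 / α i) ^ (-q) ≤
          C0 * (∑ i ∈ Finset.range (n + 1), 1 / α i) ^ (1 - p - q) := by
  obtain ⟨hp1, hq1⟩ := max_lt_iff.mp hpq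
  refine ⟨2 ^ p / (1 - q) + 2 ^ q / (1 - p), ?_, fun α hα _ n => ?_⟩
  · have : 0 < 1 - q := by linarith
    have : 0 < 1 - p := by linarith
    positivity
  have hs : StrictMono fun j => ∑ i ∈ range j, 1 / α i :=
    strictMono_nat_of_lt_succ fun j => by simpa [sum_range_succ] using hα j
  simpa only [sum_range_succ_sub_sum] using
    sum_sub_mul_rpow_neg_mul_rpow_neg_le hp hp1 hq hq1 hs (sum_range_zero _) n

theorem stmt_5 (c1 p q : ℝ) (hc1 : 0 < c1) (hp : 0 ≤ p) (hq : 0 ≤ q)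
    (hpq : max p q < 1) :
    ∃ C0 : ℝ, 0 < C0 ∧ ∀ (α : ℕ → ℝ), (∀ j, 0 < α j) → (∀ j, α j ≤ c1) →
      ∀ n : ℕ,
        ∑ j ∈ Finset.range (n + 1),
            (1 / α j) *
              ((∑ i ∈ Finset.range (n + 1), 1 / α i) -
                  ∑ i ∈ Finset.range j, 1 / α i) ^ (-p) *
              (∑ i ∈ Finset.range (j + 1), 1 / α i) ^ (-q) ≤
          C0 * (∑ i ∈ Finset.range (n + 1), 1 / α i) ^ (1 - p - q) :=
  stmt_5_general c1 p q hp hq hpq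
end

section
/- Let {α_j} be positive reals with α_j ≤ c_1, s_{-1} = 0 and s_n = Σ_{j=0}^n 1/α_j. For p, q ≥ 0 with max{p,q} = 1 there is a constant C_0 = C_0(c_1, p, q) such that Σ_{j=0}^n (1/α_j)(s_n - s_{j-1})^{-p} s_j^{-q} ≤ C_0 s_n^{1-p-q} log(1 + s_n) for all n ≥ 0. -/
/-!
Write `S_j = ∑_{i ≤ j} 1/α_i` and `s = S_n`. The `j`-th term involves `x = S_j` and
`y = s - S_{j-1}`, which satisfy `x, y ≤ s ≤ x + y`; since `p, q ≤ 1` this gives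
`y^{-p} x^{-q} ≤ s^{1-p-q} (1/x + 1/y)`. The two resulting sums `∑ (1/α_j)/S_j` and
`∑ (1/α_j)/(s - S_{j-1})` are Riemann sums of `∫ dt/t` and are bounded by `1 + log (s / δ)`
with `δ ≥ 1/c₁` the first (resp. last) increment. Finally `s ≥ 1/c₁` makes
`log (1 + s)` bounded below, so the additive constant is absorbed into `C₀ log (1 + s)`.
-/

open Finset Real

theorem sub_div_le_log_sub_log {a b : ℝ} (ha : 0 < a) (hab : a ≤ b) :
    (b - a) / b ≤ log b - log a := by
  have hb := ha.trans_le hab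
  have h := one_sub_inv_le_log_of_pos (div_pos hb ha)
  rwa [inv_div, log_div hb.ne' ha.ne', one_sub_div hb.ne'] at h

theorem sum_div_partialSum_le (c : ℕ → ℝ) (hc : ∀ i, 0 < c i) (n : ℕ) :
    ∑ j ∈ range (n + 1), c j / ∑ i ∈ range (j + 1), c i
      ≤ 1 + log (∑ i ∈ range (n + 1), c i) - log (c 0) := by
  induction n with
  | zero => simp [(hc 0).ne']
  | succ n ih =>
    have hpos : 0 < ∑ i ∈ range (n + 1), c i := sum_pos (fun i _ => hc i) nonempty_range_add_one
    have step := sub_div_le_log_sub_log hpos (le_add_of_nonneg_right (hc (n + 1)).le)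
    rw [add_sub_cancel_left] at step
    rw [sum_range_succ, sum_range_succ c (n + 1)]
    linarith

theorem sum_div_tailSum_le (c : ℕ → ℝ) (hc : ∀ i, 0 < c i) (n : ℕ) :
    ∑ j ∈ range (n + 1), c j / (∑ i ∈ range (n + 1), c i - ∑ i ∈ range j, c i)
      ≤ 1 + log (∑ i ∈ range (n + 1), c i) - log (c n) := by
  induction n generalizing c with
  | zero => simp [(hc 0).ne']
  | succ n ih =>
    have hpos : 0 < ∑ i ∈ range (n + 1), c (i + 1) :=
      sum_pos (fun i _ => hc _) nonempty_range_add_one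
    have step := sub_div_le_log_sub_log hpos (le_add_of_nonneg_right (hc 0).le)
    rw [add_sub_cancel_left] at step
    have ih' := ih (fun i => c (i + 1)) (fun i => hc _)
    rw [sum_range_succ' (fun j => c j / _)]
    simp only [sum_range_succ' c, sum_range_zero, add_sub_add_right_eq_sub, sub_zero]
    linarith

theorem rpow_neg_mul_rpow_neg_le {x y s p q : ℝ} (hx : 0 < x) (hy : 0 < y) (hxs : x ≤ s)
    (hys : y ≤ s) (hsxy : s ≤ x + y) (hp : p ≤ 1) (hq : q ≤ 1) :
    y ^ (-p) * x ^ (-q) ≤ s ^ (1 - p - q) * (1 / x + 1 / y) := by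
  have hs := hx.trans_le hxs
  calc y ^ (-p) * x ^ (-q) = y ^ (1 - p) * x ^ (1 - q) / (x * y) := by
        rw [show -p = (1 - p) - 1 by ring, show -q = (1 - q) - 1 by ring,
          rpow_sub_one hy.ne', rpow_sub_one hx.ne']
        field_simp
    _ ≤ s ^ (1 - p) * s ^ (1 - q) / (x * y) := by
        gcongr
    _ = s ^ (1 - p - q) * (s / (x * y)) := by
        rw [← rpow_add hs, show 1 - p + (1 - q) = 1 - p - q + 1 by ring, rpow_add_one hs.ne']
        ring
    _ ≤ s ^ (1 - p - q) * ((x + y) / (x * y)) := by gcongr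
    _ = s ^ (1 - p - q) * (1 / x + 1 / y) := by field_simp; ring

theorem sum_mul_rpow_neg_mul_rpow_neg_le (c : ℕ → ℝ) (hc : ∀ i, 0 < c i) {p q : ℝ}
    (hp : p ≤ 1) (hq : q ≤ 1) (n : ℕ) :
    ∑ j ∈ range (n + 1), c j * (∑ i ∈ range (n + 1), c i - ∑ i ∈ range j, c i) ^ (-p) *
        (∑ i ∈ range (j + 1), c i) ^ (-q)
      ≤ (∑ i ∈ range (n + 1), c i) ^ (1 - p - q) *
        (2 + 2 * log (∑ i ∈ range (n + 1), c i) - log (c 0) - log (c n)) := by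
  set s := ∑ i ∈ range (n + 1), c i
  have hpow : 0 ≤ s ^ (1 - p - q) :=
    rpow_nonneg (sum_nonneg fun i _ => (hc i).le) _
  have hterm : ∀ j ∈ range (n + 1),
      c j * (s - ∑ i ∈ range j, c i) ^ (-p) * (∑ i ∈ range (j + 1), c i) ^ (-q)
        ≤ s ^ (1 - p - q) * (c j / ∑ i ∈ range (j + 1), c i
          + c j / (s - ∑ i ∈ range j, c i)) := by
    intro j hj
    have hxs : ∑ i ∈ range (j + 1), c i ≤ s :=
      sum_le_sum_of_subset_of_nonneg (range_subset_range.mpr (mem_range.mp hj))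
        fun i _ _ => (hc i).le
    have hx : 0 < ∑ i ∈ range (j + 1), c i := sum_pos (fun i _ => hc i) nonempty_range_add_one
    have hsplit := sum_range_succ c j
    have hnonneg : 0 ≤ ∑ i ∈ range j, c i := sum_nonneg fun i _ => (hc i).le
    have hcj := hc j
    have key := rpow_neg_mul_rpow_neg_le hx (y := s - ∑ i ∈ range j, c i) (by linarith) hxs
      (by linarith) (by linarith) hp hq
    calc _ = c j * ((s - ∑ i ∈ range j, c i) ^ (-p) * (∑ i ∈ range (j + 1), c i) ^ (-q)) := by
          ring
      _ ≤ c j * (s ^ (1 - p - q) * (1 / ∑ i ∈ range (j + 1), c i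
            + 1 / (s - ∑ i ∈ range j, c i))) := by gcongr
      _ = _ := by ring
  calc _ ≤ _ := sum_le_sum hterm
    _ = s ^ (1 - p - q) * (∑ j ∈ range (n + 1), c j / ∑ i ∈ range (j + 1), c i
          + ∑ j ∈ range (n + 1), c j / (s - ∑ i ∈ range j, c i)) := by
        rw [← mul_sum, sum_add_distrib]
    _ ≤ _ := by
        gcongr
        linarith [sum_div_partialSum_le c hc n, sum_div_tailSum_le c hc n]

theorem le_div_log_mul_log_one_add {K a s : ℝ} (hK : 0 ≤ K) (ha : 0 < a) (has : a ≤ s) :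
    K ≤ K / log (1 + a) * log (1 + s) := by
  rw [div_mul_eq_mul_div, le_div_iff₀ (log_pos (by linarith))]
  exact mul_le_mul_of_nonneg_left (log_le_log (by linarith) (by linarith)) hK

theorem stmt_6_general (c1 p q : ℝ) (hc1 : 0 < c1)
    (hpq : max p q = 1) :
    ∃ C0 : ℝ, 0 < C0 ∧ ∀ (α : ℕ → ℝ), (∀ j, 0 < α j) → (∀ j, α j ≤ c1) →
      ∀ n : ℕ,
        ∑ j ∈ Finset.range (n + 1),
            (1 / α j) *
              ((∑ i ∈ Finset.range (n + 1), 1 / α i) -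
                  ∑ i ∈ Finset.range j, 1 / α i) ^ (-p) *
              (∑ i ∈ Finset.range (j + 1), 1 / α i) ^ (-q) ≤
          C0 * (∑ i ∈ Finset.range (n + 1), 1 / α i) ^ (1 - p - q) *
            Real.log (1 + ∑ i ∈ Finset.range (n + 1), 1 / α i) := by
  have hp1 : p ≤ 1 := hpq ▸ le_max_left p q
  have hq1 : q ≤ 1 := hpq ▸ le_max_right p q
  have hK : 0 ≤ 2 + 2 * log (1 + c1) := by have := log_nonneg (by linarith : 1 ≤ 1 + c1); linarith
  have hL : 0 < log (1 + 1 / c1) := log_pos (by have := one_div_pos.mpr hc1; linarith)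
  refine ⟨(2 + 2 * log (1 + c1)) / log (1 + 1 / c1) + 2, by positivity, ?_⟩
  intro α hα hαc n
  have hc : ∀ j, 0 < 1 / α j := fun j => one_div_pos.mpr (hα j)
  have hlog : ∀ j, -log (1 + c1) ≤ log (1 / α j) := fun j => by
    rw [one_div, log_inv, neg_le_neg_iff]
    exact log_le_log (hα j) (by linarith [hαc j])
  set s := ∑ i ∈ range (n + 1), 1 / α i
  have hs : 1 / c1 ≤ s := (one_div_le_one_div_of_le (hα 0) (hαc 0)).trans
    (single_le_sum (fun i _ => (hc i).le) (by simp))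
  have hs_pos : 0 < s := (one_div_pos.mpr hc1).trans_le hs
  have hpow : 0 ≤ s ^ (1 - p - q) := rpow_nonneg hs_pos.le _
  have hlog_s : log s ≤ log (1 + s) := log_le_log hs_pos (by linarith)
  calc _ ≤ s ^ (1 - p - q) * (2 + 2 * log s - log (1 / α 0) - log (1 / α n)) :=
        sum_mul_rpow_neg_mul_rpow_neg_le (fun i => 1 / α i) hc hp1 hq1 n
    _ ≤ s ^ (1 - p - q) * (2 + 2 * log (1 + c1) + 2 * log (1 + s)) := by
        gcongr
        linarith [hlog 0, hlog n]
    _ ≤ s ^ (1 - p - q) * (((2 + 2 * log (1 + c1)) / log (1 + 1 / c1) + 2) * log (1 + s)) := by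
        gcongr
        linarith [le_div_log_mul_log_one_add hK (one_div_pos.mpr hc1) hs]
    _ = _ := by ring

theorem stmt_6 (c1 p q : ℝ) (hc1 : 0 < c1) (hp : 0 ≤ p) (hq : 0 ≤ q)
    (hpq : max p q = 1) :
    ∃ C0 : ℝ, 0 < C0 ∧ ∀ (α : ℕ → ℝ), (∀ j, 0 < α j) → (∀ j, α j ≤ c1) →
      ∀ n : ℕ,
        ∑ j ∈ Finset.range (n + 1),
            (1 / α j) *
              ((∑ i ∈ Finset.range (n + 1), 1 / α i) -
                  ∑ i ∈ Finset.range j, 1 / α i) ^ (-p) *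
              (∑ i ∈ Finset.range (j + 1), 1 / α i) ^ (-q) ≤
          C0 * (∑ i ∈ Finset.range (n + 1), 1 / α i) ^ (1 - p - q) *
            Real.log (1 + ∑ i ∈ Finset.range (n + 1), 1 / α i) :=
  stmt_6_general c1 p q hc1 hpq
end

section
/- Let α_n = α_0 r^n with α_0 > 0, 0 < r < 1, s_{-1} = 0 and s_n = Σ_{j=0}^n 1/α_j. For every 0 ≤ μ < 1 there is a constant C_1 depending only on r and μ such that Σ_{j=0}^n (1/α_j)(s_n - s_{j-1})^{-1} s_j^{-μ} ≤ C_1 s_n^{-μ} for all n ≥ 0. -/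
/-! With `w i = 1 / α_i`, the weights grow geometrically: `w j = r ^ (n - j) * w n`. Hence the
tail `s_n - s_{j-1}` is at least its last term `w n`, giving the factor `r ^ (n - j)`, while
`s_j ≥ w j = r ^ (n - j) * w n ≥ r ^ (n - j) * (1 - r) * s_n`, costing only `r ^ (-μ (n - j))`.
Each summand is thus `O((r ^ (1 - μ)) ^ (n - j) * s_n ^ (-μ))`, and these sum to a geometric
series since `μ < 1`. -/

open Finset

namespace GeometricWeights

variable {w : ℕ → ℝ} {r μ : ℝ}

lemma sum_pow_sub_le {q : ℝ} (hq0 : 0 ≤ q) (hq1 : q < 1) (n : ℕ) :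
    ∑ j ∈ range (n + 1), q ^ (n - j) ≤ (1 - q)⁻¹ := by
  have h := sum_range_reflect (q ^ ·) (n + 1)
  simp only [add_tsub_cancel_right] at h
  rw [h, range_eq_Ico, ← one_div, ← pow_zero q]
  exact geom_sum_Ico_le_of_lt_one hq0 hq1

lemma eq_pow_mul_add (hw : ∀ i, w i = r * w (i + 1)) (j k : ℕ) :
    w j = r ^ k * w (j + k) := by
  induction k with
  | zero => simp
  | succ k ih => rw [ih, hw (j + k), pow_succ, mul_assoc, ← add_assoc]

lemma eq_pow_sub_mul (hw : ∀ i, w i = r * w (i + 1)) {j n : ℕ} (hjn : j ≤ n) :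
    w j = r ^ (n - j) * w n := by
  simpa [Nat.add_sub_cancel' hjn] using eq_pow_mul_add hw j (n - j)

lemma sum_range_succ_le_div (hw : ∀ i, w i = r * w (i + 1)) (hr0 : 0 ≤ r) (hr1 : r < 1)
    (hwn : 0 ≤ w n) : ∑ i ∈ range (n + 1), w i ≤ w n / (1 - r) := by
  calc ∑ i ∈ range (n + 1), w i = (∑ i ∈ range (n + 1), r ^ (n - i)) * w n := by
        rw [sum_mul]
        exact sum_congr rfl fun i hi => eq_pow_sub_mul hw (Nat.lt_succ_iff.mp (mem_range.mp hi))
    _ ≤ (1 - r)⁻¹ * w n := by gcongr; exact sum_pow_sub_le hr0 hr1 n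
    _ = w n / (1 - r) := by ring

lemma le_sum_range_sub_sum_range (hw : ∀ i, 0 ≤ w i) {j n : ℕ} (hjn : j ≤ n) :
    w n ≤ ∑ i ∈ range (n + 1), w i - ∑ i ∈ range j, w i := by
  rw [← sum_Ico_eq_sub _ (by omega)]
  exact single_le_sum (fun i _ => hw i) (mem_Ico.mpr ⟨hjn, n.lt_succ_self⟩)

theorem convolution_term_le (hw_pos : ∀ i, 0 < w i) (hw : ∀ i, w i = r * w (i + 1))
    (hr0 : 0 < r) (hr1 : r < 1) (hμ0 : 0 ≤ μ) {j n : ℕ} (hjn : j ≤ n) :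
    w j * (∑ i ∈ range (n + 1), w i - ∑ i ∈ range j, w i)⁻¹ *
        (∑ i ∈ range (j + 1), w i) ^ (-μ) ≤
      (1 - r) ^ (-μ) * (r ^ (1 - μ)) ^ (n - j) * (∑ i ∈ range (n + 1), w i) ^ (-μ) := by
  set S := ∑ i ∈ range (n + 1), w i
  set x := r ^ (n - j)
  have hx : 0 < x := pow_pos hr0 _
  have hS : 0 < S := sum_pos (fun i _ => hw_pos i) nonempty_range_add_one
  have hwj : w j = x * w n := eq_pow_sub_mul hw hjn
  have hS_le : (1 - r) * S ≤ w n := by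
    rw [← le_div_iff₀' (sub_pos.mpr hr1)]
    exact sum_range_succ_le_div hw hr0.le hr1 (hw_pos n).le
  have htail : w n ≤ S - ∑ i ∈ range j, w i :=
    le_sum_range_sub_sum_range (fun i => (hw_pos i).le) hjn
  have hfirst : w j * (S - ∑ i ∈ range j, w i)⁻¹ ≤ x := by
    rw [← div_eq_mul_inv, div_le_iff₀ ((hw_pos n).trans_le htail), hwj]
    exact mul_le_mul_of_nonneg_left htail hx.le
  have hpartial : x * ((1 - r) * S) ≤ ∑ i ∈ range (j + 1), w i := calc
    x * ((1 - r) * S) ≤ w j := hwj ▸ mul_le_mul_of_nonneg_left hS_le hx.le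
    _ ≤ ∑ i ∈ range (j + 1), w i :=
      single_le_sum (fun i _ => (hw_pos i).le) (self_mem_range_succ j)
  have hsecond :
      (∑ i ∈ range (j + 1), w i) ^ (-μ) ≤ x ^ (-μ) * (1 - r) ^ (-μ) * S ^ (-μ) := by
    rw [← Real.mul_rpow hx.le (sub_pos.mpr hr1).le, ← Real.mul_rpow (by positivity) hS.le,
      mul_assoc]
    exact Real.rpow_le_rpow_of_nonpos (by have := sub_pos.mpr hr1; positivity) hpartial
      (neg_nonpos.mpr hμ0)
  calc w j * (S - ∑ i ∈ range j, w i)⁻¹ * (∑ i ∈ range (j + 1), w i) ^ (-μ)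
      ≤ x * (x ^ (-μ) * (1 - r) ^ (-μ) * S ^ (-μ)) :=
        mul_le_mul hfirst hsecond (Real.rpow_nonneg (sum_nonneg fun i _ => (hw_pos i).le) _) hx.le
    _ = (1 - r) ^ (-μ) * (x * x ^ (-μ)) * S ^ (-μ) := by ring
    _ = (1 - r) ^ (-μ) * (r ^ (1 - μ)) ^ (n - j) * S ^ (-μ) := by
      rw [Real.rpow_pow_comm hr0.le, sub_eq_add_neg 1 μ, Real.rpow_add hx, Real.rpow_one]

theorem sum_convolution_le (hw_pos : ∀ i, 0 < w i) (hw : ∀ i, w i = r * w (i + 1))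
    (hr0 : 0 < r) (hr1 : r < 1) (hμ0 : 0 ≤ μ) (hμ1 : μ < 1) (n : ℕ) :
    ∑ j ∈ range (n + 1), w j * (∑ i ∈ range (n + 1), w i - ∑ i ∈ range j, w i)⁻¹ *
        (∑ i ∈ range (j + 1), w i) ^ (-μ) ≤
      (1 - r) ^ (-μ) / (1 - r ^ (1 - μ)) * (∑ i ∈ range (n + 1), w i) ^ (-μ) := by
  set S := ∑ i ∈ range (n + 1), w i
  set q := r ^ (1 - μ)
  calc _ ≤ ∑ j ∈ range (n + 1), (1 - r) ^ (-μ) * q ^ (n - j) * S ^ (-μ) :=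
        sum_le_sum fun j hj =>
          convolution_term_le hw_pos hw hr0 hr1 hμ0 (Nat.lt_succ_iff.mp (mem_range.mp hj))
    _ = (1 - r) ^ (-μ) * (∑ j ∈ range (n + 1), q ^ (n - j)) * S ^ (-μ) := by
        rw [mul_sum, sum_mul]
    _ ≤ (1 - r) ^ (-μ) * (1 - q)⁻¹ * S ^ (-μ) := by
        have hS : 0 < S := sum_pos (fun i _ => hw_pos i) nonempty_range_add_one
        have := sub_pos.mpr hr1
        gcongr
        exact sum_pow_sub_le (by positivity) (Real.rpow_lt_one hr0.le hr1 (sub_pos.mpr hμ1)) n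
    _ = (1 - r) ^ (-μ) / (1 - q) * S ^ (-μ) := by ring

end GeometricWeights

theorem stmt_7 (r μ : ℝ) (hr0 : 0 < r) (hr1 : r < 1) (hμ0 : 0 ≤ μ) (hμ1 : μ < 1) :
    ∃ C1 : ℝ, 0 < C1 ∧ ∀ α0 : ℝ, 0 < α0 →
      ∀ n : ℕ,
        ∑ j ∈ Finset.range (n + 1),
            (1 / (α0 * r ^ j)) *
              ((∑ i ∈ Finset.range (n + 1), 1 / (α0 * r ^ i)) -
                  ∑ i ∈ Finset.range j, 1 / (α0 * r ^ i)) ^ (-(1 : ℝ)) *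
              (∑ i ∈ Finset.range (j + 1), 1 / (α0 * r ^ i)) ^ (-μ) ≤
          C1 * (∑ i ∈ Finset.range (n + 1), 1 / (α0 * r ^ i)) ^ (-μ) := by
  have hr : 0 < 1 - r := sub_pos.mpr hr1
  have hq : r ^ (1 - μ) < 1 := Real.rpow_lt_one hr0.le hr1 (sub_pos.mpr hμ1)
  refine ⟨(1 - r) ^ (-μ) / (1 - r ^ (1 - μ)), div_pos (by positivity) (by linarith),
    fun α0 hα0 n => ?_⟩
  simp only [Real.rpow_neg_one]
  refine GeometricWeights.sum_convolution_le (fun i => by positivity) (fun i => ?_)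
    hr0 hr1 hμ0 hμ1 n
  field_simp
  ring
end

section
/- Let F : D(F) ⊆ X → Y be Fréchet differentiable on a ball B_ρ(x†) ⊆ D(F) with F'(x) = R(x, x̄) F'(x̄) and ‖I - R(x, x̄)‖ ≤ K_0 ‖x - x̄‖ for all x, x̄ ∈ B_ρ(x†). Then for all x ∈ B_ρ(x†): ‖F(x) - F(x†) - F'(x†)(x - x†)‖ ≤ (K_0/2) ‖x - x†‖ · ‖F'(x†)(x - x†)‖. -/
/-! Along the segment `t ↦ x† + t v`, `v = x - x†`, the remainder
`F(x† + t v) - F(x†) - t F'(x†) v` has derivative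
`(F'(x† + t v) - F'(x†)) v = -(I - R(x† + t v, x†)) F'(x†) v`,
of norm at most `K₀ t ‖v‖ ‖F'(x†) v‖`; integrating this linear bound over `[0, 1]`
produces the factor `1/2`. -/

open Set

theorem norm_image_sub_le_of_norm_deriv_right_le_mul_sub {E : Type*} [NormedAddCommGroup E]
    [NormedSpace ℝ E] {f f' : ℝ → E} {a b C : ℝ} (hf : ContinuousOn f (Icc a b))
    (hf' : ∀ t ∈ Ico a b, HasDerivWithinAt f (f' t) (Ici t) t)
    (bound : ∀ t ∈ Ico a b, ‖f' t‖ ≤ C * (t - a)) :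
    ∀ t ∈ Icc a b, ‖f t - f a‖ ≤ C / 2 * (t - a) ^ 2 := by
  have hB : ∀ t, HasDerivAt (fun s => C / 2 * (s - a) ^ 2) (C * (t - a)) t := fun t =>
    ((((hasDerivAt_id' t).sub_const a).pow 2).const_mul (C / 2)).congr_deriv
      (by norm_num; ring)
  exact image_norm_le_of_norm_deriv_right_le_deriv_boundary (hf.sub continuousOn_const)
    (fun t ht => (hf' t ht).sub_const (f a)) (by simp) hB bound

theorem Convex.norm_image_sub_sub_fderiv_le {E F : Type*} [NormedAddCommGroup E]
    [NormedSpace ℝ E] [NormedAddCommGroup F] [NormedSpace ℝ F]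
    {f : E → F} {f' : E → E →L[ℝ] F} {s : Set E} {x₀ x : E} {L : ℝ}
    (hs : Convex ℝ s) (hx₀ : x₀ ∈ s) (hx : x ∈ s)
    (hf : ∀ y ∈ s, HasFDerivAt f (f' y) y)
    (bound : ∀ y ∈ s, ‖f' y (x - x₀) - f' x₀ (x - x₀)‖ ≤ L * ‖y - x₀‖) :
    ‖f x - f x₀ - f' x₀ (x - x₀)‖ ≤ L / 2 * ‖x - x₀‖ := by
  set v := x - x₀
  have hsegment : ∀ t ∈ Icc (0 : ℝ) 1, x₀ + t • v ∈ s := fun t ht => by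
    simpa [v, AffineMap.lineMap_apply_module', add_comm] using
      hs.lineMap_mem hx₀ hx ht
  have hderiv : ∀ t ∈ Icc (0 : ℝ) 1,
      HasDerivAt (fun t : ℝ => f (x₀ + t • v) - t • f' x₀ v)
        (f' (x₀ + t • v) v - f' x₀ v) t :=
    fun t ht => by
      have hline : HasDerivAt (fun t : ℝ => x₀ + t • v) v t := by
        simpa using ((hasDerivAt_id t).smul_const v).const_add x₀
      exact (((hf _ (hsegment t ht)).comp_hasDerivAt t hline).sub
        ((hasDerivAt_id t).smul_const (f' x₀ v))).congr_deriv (by simp)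
  have key := norm_image_sub_le_of_norm_deriv_right_le_mul_sub (C := L * ‖v‖)
    (fun t ht => (hderiv t ht).continuousAt.continuousWithinAt)
    (fun t ht => (hderiv t (Ico_subset_Icc_self ht)).hasDerivWithinAt)
    (fun t ht => by
      have := bound _ (hsegment t (Ico_subset_Icc_self ht))
      rw [add_sub_cancel_left, norm_smul, Real.norm_of_nonneg ht.1] at this
      exact this.trans_eq (by ring))
    1 (right_mem_Icc.2 zero_le_one)
  convert key using 1
  · simp only [one_smul, zero_smul, add_zero, sub_zero, v, add_sub_cancel]
    congr 1; abel
  · ring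

theorem stmt_17_general (X Y : Type*)
    [NormedAddCommGroup X] [InnerProductSpace ℝ X]
    [NormedAddCommGroup Y] [InnerProductSpace ℝ Y]
    (F : X → Y) (F' : X → X →L[ℝ] Y) (R : X → X → Y →L[ℝ] Y)
    (xdag : X) (ρ K0 : ℝ)
    (hdiff : ∀ x ∈ Metric.ball xdag ρ, HasFDerivAt F (F' x) x)
    (hR : ∀ x ∈ Metric.ball xdag ρ, ∀ x' ∈ Metric.ball xdag ρ,
      F' x = (R x x').comp (F' x') ∧
        ‖ContinuousLinearMap.id ℝ Y - R x x'‖ ≤ K0 * ‖x - x'‖) :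
    ∀ x ∈ Metric.ball xdag ρ,
      ‖F x - F xdag - F' xdag (x - xdag)‖ ≤
        K0 / 2 * ‖x - xdag‖ * ‖F' xdag (x - xdag)‖ := by
  intro x hx
  have hxdag : xdag ∈ Metric.ball xdag ρ := Metric.mem_ball_self (Metric.pos_of_mem_ball hx)
  set w := F' xdag (x - xdag)
  have bound : ∀ y ∈ Metric.ball xdag ρ,
      ‖F' y (x - xdag) - w‖ ≤ K0 * ‖w‖ * ‖y - xdag‖ := fun y hy => by
    obtain ⟨hfactor, hnorm⟩ := hR y hy xdag hxdag
    calc ‖F' y (x - xdag) - w‖ = ‖(ContinuousLinearMap.id ℝ Y - R y xdag) w‖ := by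
          rw [hfactor, ← norm_neg]; simp [w]
      _ ≤ K0 * ‖y - xdag‖ * ‖w‖ := (ContinuousLinearMap.le_opNorm _ w).trans (by gcongr)
      _ = K0 * ‖w‖ * ‖y - xdag‖ := by ring
  calc ‖F x - F xdag - w‖ ≤ K0 * ‖w‖ / 2 * ‖x - xdag‖ :=
        (convex_ball xdag ρ).norm_image_sub_sub_fderiv_le hxdag hx hdiff bound
    _ = K0 / 2 * ‖x - xdag‖ * ‖w‖ := by ring

theorem stmt_17 (X Y : Type*)
    [NormedAddCommGroup X] [InnerProductSpace ℝ X] [CompleteSpace X]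
    [NormedAddCommGroup Y] [InnerProductSpace ℝ Y] [CompleteSpace Y]
    (F : X → Y) (F' : X → X →L[ℝ] Y) (R : X → X → Y →L[ℝ] Y)
    (xdag : X) (ρ K0 : ℝ) (hρ : 0 < ρ) (hK0 : 0 ≤ K0)
    (hdiff : ∀ x ∈ Metric.ball xdag ρ, HasFDerivAt F (F' x) x)
    (hR : ∀ x ∈ Metric.ball xdag ρ, ∀ x' ∈ Metric.ball xdag ρ,
      F' x = (R x x').comp (F' x') ∧
        ‖ContinuousLinearMap.id ℝ Y - R x x'‖ ≤ K0 * ‖x - x'‖) :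
    ∀ x ∈ Metric.ball xdag ρ,
      ‖F x - F xdag - F' xdag (x - xdag)‖ ≤
        K0 / 2 * ‖x - xdag‖ * ‖F' xdag (x - xdag)‖ :=
  stmt_17_general X Y F F' R xdag ρ K0 hdiff hR
end
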